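/- Let M be an alternative O-bimodule with M = O·A(M) and Re(x) = (5/12)x - (1/12)Σ_{i=1}^{7} e_i x e_i. Then every x ∈ M satisfies the reconstruction formula x = Re(x) - Σ_{i=1}^{7} e_i Re(e_i x). -/

import Mathlib

noncomputable section

open scoped Quaternion

/-- The octonions, built from pairs of quaternions via the Cayley–Dickson construction. -/
def Octonion : Type := ℍ[ℝ] × ℍ[ℝ]

namespace Octonion

def mk' (a b : ℍ[ℝ]) : Octonion := Prod.mk a b
def q1 (x : Octonion) : ℍ[ℝ] := Prod.fst x
def q2 (x : Octonion) : ℍ[ℝ] := Prod.snd x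

instance : AddCommGroup Octonion := inferInstanceAs (AddCommGroup (ℍ[ℝ] × ℍ[ℝ]))
instance : Module ℝ Octonion := inferInstanceAs (Module ℝ (ℍ[ℝ] × ℍ[ℝ]))
instance : One Octonion := ⟨mk' 1 0⟩
instance : Mul Octonion :=
  ⟨fun x y => mk' (q1 x * q1 y - star (q2 y) * q2 x) (q2 y * q1 x + q2 x * star (q1 y))⟩

/-- Octonion conjugation. -/
def conj (x : Octonion) : Octonion := mk' (star (q1 x)) (-(q2 x))

/-- The real part of an octonion. -/
def re (x : Octonion) : ℝ := (q1 x).re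

/-- The standard basis `e 0 = 1, e 1, …, e 7` of the octonions. -/
def e : Fin 8 → Octonion :=
  ![mk' 1 0, mk' ⟨0,1,0,0⟩ 0, mk' ⟨0,0,1,0⟩ 0, mk' ⟨0,0,0,1⟩ 0,
    mk' 0 1, mk' 0 ⟨0,1,0,0⟩, mk' 0 ⟨0,0,1,0⟩, mk' 0 ⟨0,0,0,1⟩]

/-- The coordinates of an octonion with respect to the standard basis. -/
def coord (x : Octonion) : Fin 8 → ℝ :=
  ![(q1 x).re, (q1 x).imI, (q1 x).imJ, (q1 x).imK,
    (q2 x).re, (q2 x).imI, (q2 x).imJ, (q2 x).imK]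

end Octonion

/-!
If `a ∈ M` satisfies `[p, q, a] = 0` for all octonions `p, q`, the alternative bimodule identities
give `[s, b, c] a = a [s, b, c]`. Every imaginary unit is a multiple of an associator, so
`eᵢ a = a eᵢ`, and `q ↦ q a` intertwines both octonion actions. On `𝕆` itself `Re` is the real part
and the formula is the expansion `q = Re q - ∑ᵢ Re (eᵢ q) eᵢ` in the standard basis; it transfers
to each `q a`, and these span `M`.
-/

namespace Octonion

@[ext] lemma ext {x y : Octonion} (h1 : q1 x = q1 y) (h2 : q2 x = q2 y) : x = y := Prod.ext h1 h2

@[simp] lemma q1_mk' (a b : ℍ[ℝ]) : q1 (mk' a b) = a := rfl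
@[simp] lemma q2_mk' (a b : ℍ[ℝ]) : q2 (mk' a b) = b := rfl
@[simp] lemma q1_zero : q1 0 = 0 := rfl
@[simp] lemma q2_zero : q2 0 = 0 := rfl
@[simp] lemma q1_one : q1 1 = 1 := rfl
@[simp] lemma q2_one : q2 1 = 0 := rfl
@[simp] lemma q1_add (x y : Octonion) : q1 (x + y) = q1 x + q1 y := rfl
@[simp] lemma q2_add (x y : Octonion) : q2 (x + y) = q2 x + q2 y := rfl
@[simp] lemma q1_neg (x : Octonion) : q1 (-x) = -q1 x := rfl
@[simp] lemma q2_neg (x : Octonion) : q2 (-x) = -q2 x := rfl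
@[simp] lemma q1_sub (x y : Octonion) : q1 (x - y) = q1 x - q1 y := rfl
@[simp] lemma q2_sub (x y : Octonion) : q2 (x - y) = q2 x - q2 y := rfl
@[simp] lemma q1_smul (r : ℝ) (x : Octonion) : q1 (r • x) = r • q1 x := rfl
@[simp] lemma q2_smul (r : ℝ) (x : Octonion) : q2 (r • x) = r • q2 x := rfl
@[simp] lemma q1_mul (x y : Octonion) : q1 (x * y) = q1 x * q1 y - star (q2 y) * q2 x := rfl
@[simp] lemma q2_mul (x y : Octonion) : q2 (x * y) = q2 y * q1 x + q2 x * star (q1 y) := rfl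

section

/-- Only a local instance: globally it would change how `*` on `Octonion` elaborates in later
statements. -/
abbrev nonAssocRing : NonAssocRing Octonion :=
  { (inferInstance : AddCommGroup Octonion), (inferInstance : One Octonion),
    (inferInstance : Mul Octonion) with
    one_mul := fun _ => by ext <;> simp
    mul_one := fun _ => by ext <;> simp
    left_distrib := fun _ _ _ => by ext <;> simp <;> ring
    right_distrib := fun _ _ _ => by ext <;> simp <;> ring
    zero_mul := fun _ => by ext <;> simp
    mul_zero := fun _ => by ext <;> simp }

attribute [local instance] nonAssocRing

local instance : IsScalarTower ℝ Octonion Octonion :=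
  ⟨fun _ _ _ => by ext <;> simp <;> ring⟩

local instance : SMulCommClass ℝ Octonion Octonion :=
  ⟨fun _ _ _ => by ext <;> simp <;> ring⟩

/-- An anonymous constructor `⟨a, b, c, d⟩` elaborates at type `ℍ[ℝ,-1,-1]`, on which the `simp`
lemmas about `mk'` do not fire (as in the definition of `e`); `quat` has type `ℍ[ℝ]`. -/
def quat (a b c d : ℝ) : ℍ[ℝ] := ⟨a, b, c, d⟩

@[simp] lemma quat_re (a b c d : ℝ) : (quat a b c d).re = a := rfl
@[simp] lemma quat_imI (a b c d : ℝ) : (quat a b c d).imI = b := rfl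
@[simp] lemma quat_imJ (a b c d : ℝ) : (quat a b c d).imJ = c := rfl
@[simp] lemma quat_imK (a b c d : ℝ) : (quat a b c d).imK = d := rfl

lemma e_eq : e = ![mk' 1 0, mk' (quat 0 1 0 0) 0, mk' (quat 0 0 1 0) 0, mk' (quat 0 0 0 1) 0,
    mk' 0 1, mk' 0 (quat 0 1 0 0), mk' 0 (quat 0 0 1 0), mk' 0 (quat 0 0 0 1)] := rfl

lemma exists_associator_eq_two_smul (j : Fin 7) :
    ∃ a b c : Octonion, a * b * c - a * (b * c) = (2 : ℝ) • e j.succ := by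
  fin_cases j <;>
    [refine ⟨e 4, e 2, e 7, ?_⟩; refine ⟨e 1, e 4, e 7, ?_⟩; refine ⟨e 4, e 1, e 6, ?_⟩;
      refine ⟨e 2, e 1, e 7, ?_⟩; refine ⟨e 1, e 2, e 6, ?_⟩; refine ⟨e 2, e 1, e 5, ?_⟩;
      refine ⟨e 1, e 2, e 4, ?_⟩] <;>
    ext <;> simp [e_eq] <;> norm_num

lemma re_smul_one_sub_sum_e_mul (q : Octonion) :
    re q • 1 - ∑ i : Fin 7, re (e i.succ * q) • e i.succ = q := by
  ext <;> simp [Fin.sum_univ_seven, e_eq, re]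

variable {M : Type*} [AddCommGroup M] [Module ℝ M]

/-- `Re x = (5/12) x - (1/12) ∑ᵢ eᵢ x eᵢ`, for the left and right actions `L` and `R`. -/
def bimoduleRe (L R : Octonion →ₗ[ℝ] M →ₗ[ℝ] M) : M →ₗ[ℝ] M :=
  (5 / 12 : ℝ) • LinearMap.id - (1 / 12 : ℝ) • ∑ i : Fin 7, R (e i.succ) ∘ₗ L (e i.succ)

def reconstruction (L R : Octonion →ₗ[ℝ] M →ₗ[ℝ] M) : M →ₗ[ℝ] M :=
  bimoduleRe L R - ∑ i : Fin 7, L (e i.succ) ∘ₗ bimoduleRe L R ∘ₗ L (e i.succ)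

lemma bimoduleRe_mul (q : Octonion) :
    bimoduleRe (LinearMap.mul ℝ Octonion) (LinearMap.mul ℝ Octonion).flip q = re q • 1 := by
  ext <;> simp [bimoduleRe, Fin.sum_univ_seven, e_eq, re] <;> ring

lemma reconstruction_mul (q : Octonion) :
    reconstruction (LinearMap.mul ℝ Octonion) (LinearMap.mul ℝ Octonion).flip q = q := by
  simpa [reconstruction, bimoduleRe_mul] using re_smul_one_sub_sum_e_mul q

/-- `a ∈ A(M)`: the associators `[p, q, a]` vanish. -/
def IsAssociativeElement (L : Octonion →ₗ[ℝ] M →ₗ[ℝ] M) (a : M) : Prop :=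
  ∀ p q : Octonion, L (p * q) a = L p (L q a)

/-- `[p, q, m] = [q, m, p] = [m, p, q]`, with the associators written out through `L` and `R`. -/
structure IsAlternativeBimodule (L R : Octonion →ₗ[ℝ] M →ₗ[ℝ] M) : Prop where
  assoc_left_eq_middle : ∀ (p q : Octonion) (m : M),
    L (p * q) m - L p (L q m) = R p (L q m) - L q (R p m)
  assoc_middle_eq_right : ∀ (p q : Octonion) (m : M),
    R p (L q m) - L q (R p m) = R q (R p m) - R (p * q) m

namespace IsAlternativeBimodule

variable {L R : Octonion →ₗ[ℝ] M →ₗ[ℝ] M} {a : M}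

lemma right_left_comm (h : IsAlternativeBimodule L R)
    (ha : IsAssociativeElement L a) (s t : Octonion) :
    R s (L t a) = L t (R s a) := by
  have h' := h.assoc_left_eq_middle s t a
  rwa [ha, sub_self, eq_comm, sub_eq_zero] at h'

lemma right_right (h : IsAlternativeBimodule L R)
    (ha : IsAssociativeElement L a) (s t : Octonion) :
    R t (R s a) = R (s * t) a := by
  have h' := h.assoc_middle_eq_right s t a
  rwa [h.right_left_comm ha, sub_self, eq_comm, sub_eq_zero] at h'

lemma left_associator_eq_right (h : IsAlternativeBimodule L R)
    (ha : IsAssociativeElement L a) (s b c : Octonion) :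
    L (s * b * c - s * (b * c)) a = R (s * b * c - s * (b * c)) a :=
  calc L (s * b * c - s * (b * c)) a
      = L (s * b) (L c a) - L s (L b (L c a)) := by simp only [map_sub, LinearMap.sub_apply, ha _ _]
    _ = R s (L b (L c a)) - L b (R s (L c a)) := h.assoc_left_eq_middle s b (L c a)
    _ = L (b * c) (R s a) - L b (L c (R s a)) := by
      rw [← ha b c, h.right_left_comm ha, h.right_left_comm ha]
    _ = R b (L c (R s a)) - L c (R b (R s a)) := h.assoc_left_eq_middle b c (R s a)
    _ = R c (R b (R s a)) - R (b * c) (R s a) := h.assoc_middle_eq_right b c (R s a)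
    _ = R (s * b * c - s * (b * c)) a := by
      simp only [h.right_right ha, map_sub, LinearMap.sub_apply]

lemma left_e_succ_eq_right (h : IsAlternativeBimodule L R)
    (ha : IsAssociativeElement L a) (j : Fin 7) :
    L (e j.succ) a = R (e j.succ) a := by
  obtain ⟨s, b, c, hsbc⟩ := exists_associator_eq_two_smul j
  simpa [hsbc] using h.left_associator_eq_right ha s b c

lemma left_mul_e_succ (h : IsAlternativeBimodule L R)
    (ha : IsAssociativeElement L a) (q : Octonion) (j : Fin 7) :
    L (q * e j.succ) a = R (e j.succ) (L q a) := by
  rw [ha, h.left_e_succ_eq_right ha, h.right_left_comm ha]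

lemma bimoduleRe_left (h : IsAlternativeBimodule L R)
    (ha : IsAssociativeElement L a) (q : Octonion) :
    bimoduleRe L R (L q a) =
      L (bimoduleRe (LinearMap.mul ℝ Octonion) (LinearMap.mul ℝ Octonion).flip q) a := by
  simp [bimoduleRe, h.left_mul_e_succ ha, ha _ _]

lemma reconstruction_left (h : IsAlternativeBimodule L R)
    (ha : IsAssociativeElement L a) (q : Octonion) :
    reconstruction L R (L q a) = L q a := by
  conv_rhs => rw [← reconstruction_mul q]
  simp [reconstruction, h.bimoduleRe_left ha, ← ha _ _]

end IsAlternativeBimodule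

end

end Octonion

open Octonion in
theorem octonion_bimodule_reconstruction_general
    {M : Type*} [AddCommGroup M] [Module ℝ M]
    (L R : Octonion →ₗ[ℝ] M →ₗ[ℝ] M)
    -- `[p,q,m] = [q,m,p]`
    (hLM : ∀ (p q : Octonion) (m : M),
      L (p * q) m - L p (L q m) = R p (L q m) - L q (R p m))
    -- `[q,m,p] = [m,p,q]`
    (hMR : ∀ (p q : Octonion) (m : M),
      R p (L q m) - L q (R p m) = R q (R p m) - R (p * q) m)
    -- `M = 𝕆 · A(M)`
    (hspan : ∀ m : M, m ∈ Submodule.span ℝ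
      {y : M | ∃ (p : Octonion) (x : M),
        (∀ a b : Octonion, L (a * b) x = L a (L b x)) ∧ y = L p x})
    (ReM : M → M)
    (hRe : ∀ x : M, ReM x
      = (5 / 12 : ℝ) • x
        - (1 / 12 : ℝ) • ∑ i : Fin 7, R (e i.succ) (L (e i.succ) x)) :
    ∀ x : M, x = ReM x - ∑ i : Fin 7, L (e i.succ) (ReM (L (e i.succ) x)) := by
  have hReM : ReM = bimoduleRe L R := funext fun x => by simp [hRe, bimoduleRe]
  intro x
  have hx : reconstruction L R x = x := by
    refine LinearMap.eqOn_span (g := LinearMap.id) ?_ (hspan x)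
    rintro _ ⟨p, a, ha, rfl⟩
    exact IsAlternativeBimodule.reconstruction_left ⟨hLM, hMR⟩ ha p
  simpa [reconstruction, hReM] using hx.symm

open Octonion in
/-- Reconstruction formula in an alternative `𝕆`-bimodule `M` with `M = 𝕆·A(M)`:
`x = Re x - ∑ᵢ eᵢ Re(eᵢ x)`. -/
theorem octonion_bimodule_reconstruction
    {M : Type*} [AddCommGroup M] [Module ℝ M]
    (L R : Octonion →ₗ[ℝ] M →ₗ[ℝ] M)
    (hL1 : ∀ m : M, L 1 m = m) (hR1 : ∀ m : M, R 1 m = m)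
    -- `[p,q,m] = [q,m,p]`
    (hLM : ∀ (p q : Octonion) (m : M),
      L (p * q) m - L p (L q m) = R p (L q m) - L q (R p m))
    -- `[q,m,p] = [m,p,q]`
    (hMR : ∀ (p q : Octonion) (m : M),
      R p (L q m) - L q (R p m) = R q (R p m) - R (p * q) m)
    -- `M = 𝕆 · A(M)`
    (hspan : ∀ m : M, m ∈ Submodule.span ℝ
      {y : M | ∃ (p : Octonion) (x : M),
        (∀ a b : Octonion, L (a * b) x = L a (L b x)) ∧ y = L p x})
    (ReM : M → M)
    (hRe : ∀ x : M, ReM x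
      = (5 / 12 : ℝ) • x
        - (1 / 12 : ℝ) • ∑ i : Fin 7, R (e i.succ) (L (e i.succ) x)) :
    ∀ x : M, x = ReM x - ∑ i : Fin 7, L (e i.succ) (ReM (L (e i.succ) x)) :=
  octonion_bimodule_reconstruction_general L R hLM hMR hspan ReM hRe
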